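/- Let X = {0,1}^n and let x,y ∈ X with d(x,y) = w. For every t ∈ {0,…,n}, the size of the intersection of the Hamming balls B(x,t) and B(y,t) has the Krawtchouk expansion |B(x,t) ∩ B(y,t)| = 2^{−n}·Σ_{k=0}^n c_k(t)²·K_k^{(n)}(w), where c_0(t) = Σ_{i=0}^t C(n,i), and for k = 1,…,n: c_k(t) = K_t^{(n−1)}(k−1) if t ≤ n−1, and c_k(n) = 0. -/

import Mathlib

/-!
The indicator `f_x` of `B(x,t)` (with `{0,1}^n` viewed as the subsets of an `n`-set) has Walsh
transform `f̂_x(S) = (-1)^{|x ∩ S|} c(|S|)` with `c(k) = Σ_{i ≤ t} K_i^{(n)}(k)`, because the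
sphere sums `Σ_{|u| = i} (-1)^{|u ∩ S|}` are Krawtchouk values. Parseval turns
`|B(x,t) ∩ B(y,t)| = Σ_z f_x(z) f_y(z)` into `2^{-n} Σ_S c(|S|)² (-1)^{|(x ∆ y) ∩ S|}`, and
grouping by `|S| = k` produces `K_k^{(n)}(w)` again. Finally the Pascal-type recurrence
`K_{i+1}^{(n+1)}(k+1) = K_{i+1}^{(n)}(k) - K_i^{(n)}(k)` telescopes `c(k)` to `K_t^{(n-1)}(k-1)`.
Krawtchouk values are handled through `K_k^{(n)}(x) = [X^k] (1 - X)^x (1 + X)^{n-x}`.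
-/

open Finset Polynomial
open scoped symmDiff

/-- The Krawtchouk polynomial `K_k^{(n)}(x) = Σ_{i=0}^k (−1)^i·C(x,i)·C(n−x,k−i)`. -/
def kraw (n k x : ℕ) : ℤ :=
  ∑ i ∈ Finset.range (k + 1),
    (-1 : ℤ) ^ i * (Nat.choose x i : ℤ) * (Nat.choose (n - x) (k - i) : ℤ)

/-- The coefficients `c_k(t)`: `c_0(t) = Σ_{i=0}^t C(n,i)`; for `k ≥ 1`,
`c_k(t) = K_t^{(n−1)}(k−1)` if `t ≤ n−1` and `c_k(n) = 0`. -/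
noncomputable def ckt (n t k : ℕ) : ℝ :=
  if k = 0 then ∑ i ∈ Finset.range (t + 1), (Nat.choose n i : ℝ)
  else if t < n then (kraw (n - 1) t (k - 1) : ℝ) else 0

lemma Polynomial.coeff_one_sub_X_pow {R : Type*} [CommRing R] (k j : ℕ) :
    ((1 - X : R[X]) ^ k).coeff j = (-1) ^ j * k.choose j := by
  induction k generalizing j with
  | zero => cases j <;> simp [coeff_one]
  | succ k ih =>
    rw [pow_succ', sub_mul, one_mul]
    cases j with
    | zero => simp [ih]
    | succ j => simp only [coeff_sub, coeff_X_mul, ih, Nat.choose_succ_succ']; push_cast; ring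

lemma kraw_eq_coeff (n k x : ℕ) :
    kraw n k x = ((1 - X : ℤ[X]) ^ x * (1 + X) ^ (n - x)).coeff k := by
  rw [coeff_mul, Nat.sum_antidiagonal_eq_sum_range_succ_mk, kraw]
  simp only [coeff_one_sub_X_pow, coeff_one_add_X_pow]

lemma kraw_degree_zero (n x : ℕ) : kraw n 0 x = 1 := by
  simp [kraw]

lemma kraw_at_zero (n k : ℕ) : kraw n k 0 = n.choose k := by
  simp [kraw_eq_coeff, coeff_one_add_X_pow]

lemma kraw_succ_succ_succ (n k x : ℕ) :
    kraw (n + 1) (k + 1) (x + 1) = kraw n (k + 1) x - kraw n k x := by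
  simp only [kraw_eq_coeff, Nat.add_sub_add_right, pow_succ', mul_assoc, sub_mul, one_mul,
    coeff_sub, coeff_X_mul]

lemma kraw_eq_zero_of_lt {n k x : ℕ} (hnk : n < k) (hx : x ≤ n) : kraw n k x = 0 := by
  refine sum_eq_zero fun i _ => ?_
  rcases lt_or_ge x i with h | h
  · simp [Nat.choose_eq_zero_of_lt h]
  · simp [Nat.choose_eq_zero_of_lt (show n - x < k - i by omega)]

lemma sum_range_kraw_succ (n t x : ℕ) :
    ∑ k ∈ range (t + 1), kraw (n + 1) k (x + 1) = kraw n t x := by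
  induction t with
  | zero => simp [kraw_degree_zero]
  | succ t ih => rw [sum_range_succ, ih, kraw_succ_succ_succ]; ring

lemma ckt_eq_sum_range_kraw {n t k : ℕ} (ht : t ≤ n) (hk : k ≤ n) :
    ckt n t k = ((∑ i ∈ range (t + 1), kraw n i k : ℤ) : ℝ) := by
  rcases k with _ | x
  · simp [ckt, kraw_at_zero]
  obtain ⟨m, rfl⟩ : ∃ m, n = m + 1 := ⟨n - 1, by omega⟩
  rw [ckt, if_neg x.succ_ne_zero, sum_range_kraw_succ, add_tsub_cancel_right,
    add_tsub_cancel_right]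
  split_ifs with htm
  · rfl
  · rw [kraw_eq_zero_of_lt (by omega) (by omega), Int.cast_zero]

lemma Finset.card_symmDiff_add_two_mul_card_inter {α : Type*} [DecidableEq α]
    (s t : Finset α) : #(s ∆ t) + 2 * #(s ∩ t) = #s + #t := by
  rw [← card_union_add_card_inter, symmDiff_eq_sup_sdiff_inf, two_mul, ← add_assoc]
  congr 1
  exact card_sdiff_add_card_eq_card inter_subset_union

lemma neg_one_pow_card_symmDiff_inter {α : Type*} [DecidableEq α] (u v S : Finset α) :
    (-1 : ℤ) ^ #((u ∆ v) ∩ S) = (-1) ^ #(u ∩ S) * (-1) ^ #(v ∩ S) := by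
  have hdistrib : (u ∆ v) ∩ S = (u ∩ S) ∆ (v ∩ S) := inf_symmDiff_distrib_right u v S
  rw [hdistrib, ← pow_add, ← card_symmDiff_add_two_mul_card_inter, pow_add, pow_mul]
  simp

section WalshAnalysis

variable {α : Type*} [Fintype α] [DecidableEq α]

lemma sum_neg_one_pow_card_inter_mul_pow {R : Type*} [CommRing R] (S : Finset α) (y : R) :
    ∑ u : Finset α, (-1 : R) ^ #(u ∩ S) * y ^ #u
      = (1 - y) ^ #S * (1 + y) ^ (Fintype.card α - #S) := by
  have hprod := prod_one_add (f := fun a => (if a ∈ S then -1 else 1) * y) (univ : Finset α)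
  simp only [prod_mul_distrib, prod_const, prod_ite_mem, powerset_univ] at hprod
  rw [← hprod]
  simp only [ite_mul, neg_one_mul, one_mul, add_ite, ← sub_eq_add_neg, prod_ite,
    filter_mem_eq_inter, univ_inter, prod_const]
  rw [filter_notMem_eq_sdiff, ← compl_eq_univ_sdiff, card_compl]

lemma sum_neg_one_pow_card_inter (S : Finset α) :
    ∑ u : Finset α, (-1 : ℤ) ^ #(u ∩ S) = if S = ∅ then 2 ^ Fintype.card α else 0 := by
  have h := sum_neg_one_pow_card_inter_mul_pow S (1 : ℤ)
  simp only [one_pow, mul_one] at h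
  rw [h]
  split_ifs with hS
  · simp [hS]
  · simp [zero_pow (card_ne_zero.2 (nonempty_iff_ne_empty.2 hS))]

lemma sum_card_eq_neg_one_pow_card_inter (S : Finset α) (k : ℕ) :
    ∑ u : Finset α with #u = k, (-1 : ℤ) ^ #(u ∩ S) = kraw (Fintype.card α) k #S := by
  have h := congrArg (coeff · k) (sum_neg_one_pow_card_inter_mul_pow S (X : ℤ[X]))
  simp only [finsetSum_coeff, ← C_1, ← C_neg, ← C_pow, coeff_C_mul, coeff_X_pow] at h
  rw [kraw_eq_coeff, ← map_one C, ← h, sum_filter]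
  simp [eq_comm]

lemma sum_card_le_neg_one_pow_card_inter (S : Finset α) (t : ℕ) :
    ∑ v : Finset α, (if #v ≤ t then (-1 : ℤ) ^ #(v ∩ S) else 0)
      = ∑ k ∈ range (t + 1), kraw (Fintype.card α) k #S := by
  simp only [← sum_card_eq_neg_one_pow_card_inter, sum_filter]
  rw [sum_comm]
  refine sum_congr rfl fun v _ => ?_
  simp only [sum_ite_eq, mem_range, Nat.lt_succ_iff]

def walshTransform (f : Finset α → ℤ) (S : Finset α) : ℤ :=
  ∑ u, f u * (-1) ^ #(u ∩ S)

lemma sum_walshTransform_mul (f g : Finset α → ℤ) :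
    ∑ S, walshTransform f S * walshTransform g S = 2 ^ Fintype.card α * ∑ u, f u * g u := by
  have horth (u v : Finset α) : ∑ S : Finset α, (-1 : ℤ) ^ #(u ∩ S) * (-1) ^ #(v ∩ S)
      = if u = v then 2 ^ Fintype.card α else 0 := by
    simp_rw [← neg_one_pow_card_symmDiff_inter, inter_comm (u ∆ v)]
    simp only [sum_neg_one_pow_card_inter, symmDiff_eq_empty]
  calc ∑ S, walshTransform f S * walshTransform g S
      = ∑ u, ∑ v, f u * g v * ∑ S : Finset α, (-1 : ℤ) ^ #(u ∩ S) * (-1) ^ #(v ∩ S) := by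
        simp only [walshTransform, sum_mul_sum]
        simp only [mul_sum]
        rw [sum_comm]
        refine sum_congr rfl fun u _ => ?_
        rw [sum_comm]
        refine sum_congr rfl fun v _ => sum_congr rfl fun S _ => by ring
    _ = 2 ^ Fintype.card α * ∑ u, f u * g u := by
        simp only [horth, mul_ite, mul_zero, sum_ite_eq, mem_univ, if_true, mul_sum]
        exact sum_congr rfl fun u _ => by ring

lemma walshTransform_ball (x S : Finset α) (t : ℕ) :
    walshTransform (fun u => if #(x ∆ u) ≤ t then 1 else 0) S
      = (-1) ^ #(x ∩ S) * ∑ k ∈ range (t + 1), kraw (Fintype.card α) k #S := by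
  rw [walshTransform, ← Equiv.sum_comp ((symmDiff_right_involutive x).toPerm _),
    ← sum_card_le_neg_one_pow_card_inter, mul_sum]
  refine sum_congr rfl fun v _ => ?_
  simp only [Function.Involutive.coe_toPerm, symmDiff_symmDiff_cancel_left,
    neg_one_pow_card_symmDiff_inter]
  split_ifs <;> ring

theorem card_ball_inter_ball (x y : Finset α) (t : ℕ) :
    2 ^ Fintype.card α * (#{u | #(x ∆ u) ≤ t ∧ #(y ∆ u) ≤ t} : ℤ)
      = ∑ k ∈ range (Fintype.card α + 1),
          (∑ i ∈ range (t + 1), kraw (Fintype.card α) i k) ^ 2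
            * kraw (Fintype.card α) k #(x ∆ y) := by
  set c : ℕ → ℤ := fun k => ∑ i ∈ range (t + 1), kraw (Fintype.card α) i k
  calc 2 ^ Fintype.card α * (#{u | #(x ∆ u) ≤ t ∧ #(y ∆ u) ≤ t} : ℤ)
      = ∑ S, walshTransform (fun u => if #(x ∆ u) ≤ t then 1 else 0) S
          * walshTransform (fun u => if #(y ∆ u) ≤ t then 1 else 0) S := by
        rw [sum_walshTransform_mul, card_filter]
        simp only [ite_zero_mul_ite_zero, mul_one]
        push_cast
        rfl
    _ = ∑ S, c #S ^ 2 * (-1) ^ #((x ∆ y) ∩ S) := by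
        simp only [walshTransform_ball, neg_one_pow_card_symmDiff_inter]
        exact sum_congr rfl fun S _ => by ring
    _ = ∑ k ∈ range (Fintype.card α + 1), c k ^ 2 * kraw (Fintype.card α) k #(x ∆ y) := by
        rw [← sum_fiberwise_of_maps_to (g := card)
          fun S _ => mem_range.2 (Nat.lt_succ_of_le (card_le_univ S))]
        refine sum_congr rfl fun k _ => ?_
        rw [← sum_card_eq_neg_one_pow_card_inter, mul_sum]
        refine sum_congr rfl fun S hS => ?_
        rw [(mem_filter.1 hS).2, inter_comm]

end WalshAnalysis

section BoolFun

variable {ι : Type*} [Fintype ι] [DecidableEq ι]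

def boolFunEquivFinset : (ι → Bool) ≃ Finset ι where
  toFun z := {i | z i}
  invFun s i := i ∈ s
  left_inv z := by ext; simp
  right_inv s := by ext; simp

lemma hammingDist_eq_card_symmDiff (x y : ι → Bool) :
    hammingDist x y = #(boolFunEquivFinset x ∆ boolFunEquivFinset y) := by
  rw [hammingDist]
  congr 1
  ext i
  cases hx : x i <;> cases hy : y i <;> simp [boolFunEquivFinset, mem_symmDiff, hx, hy]

end BoolFun

/-- Krawtchouk expansion of the intersection of two Hamming balls: for `x,y ∈ {0,1}^n` with
`d(x,y) = w` and `t ∈ {0,…,n}`,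
`|B(x,t) ∩ B(y,t)| = 2^{−n}·Σ_{k=0}^n c_k(t)²·K_k^{(n)}(w)`. -/
theorem ball_intersection_krawtchouk (n : ℕ) (x y : Fin n → Bool) (w t : ℕ)
    (hw : hammingDist x y = w) (ht : t ≤ n) :
    ((Finset.univ.filter
        (fun z : Fin n → Bool => hammingDist x z ≤ t ∧ hammingDist y z ≤ t)).card : ℝ)
      = ((2 : ℝ) ^ n)⁻¹ * ∑ k ∈ Finset.range (n + 1), (ckt n t k) ^ 2 * (kraw n k w : ℝ) := by
  have hcard : #{z : Fin n → Bool | hammingDist x z ≤ t ∧ hammingDist y z ≤ t}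
      = #{u | #(boolFunEquivFinset x ∆ u) ≤ t ∧ #(boolFunEquivFinset y ∆ u) ≤ t} :=
    card_equiv boolFunEquivFinset fun z => by simp [hammingDist_eq_card_symmDiff]
  have key := congrArg (Int.cast : ℤ → ℝ)
    (card_ball_inter_ball (boolFunEquivFinset x) (boolFunEquivFinset y) t)
  rw [Fintype.card_fin, ← hammingDist_eq_card_symmDiff, hw] at key
  push_cast at key
  rw [hcard, eq_inv_mul_iff_mul_eq₀ (by positivity), key]
  exact sum_congr rfl fun k hk => by
    rw [ckt_eq_sum_range_kraw ht (mem_range_succ_iff.1 hk), Int.cast_sum]
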